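/- arXiv:1904.03347 — 2 statements merged into one kernel-verified Lean document; each statement's English description precedes it below -/
import Mathlib

section
/- Let C be an initial configuration of the BRP, let 𝔅¹₁, …, 𝔅¹_{n₁} be a partition of the full block set Fin B into pairwise disjoint sets, and let 𝔅²₁, …, 𝔅²_{n₂} be another such partition. Then f(Fin B) ≥ f_BG(Fin B) + f_nonBG(Fin B) ≥ Σ_{i=1}^{n₁} f_BG(𝔅¹_i) + Σ_{i=1}^{n₂} f_nonBG(𝔅²_i). -/
/-- A configuration of the BRP: each stack holds a list of blocks, bottom to top. -/
abbrev Config (B S : ℕ) := Fin S → List (Fin B)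

/-- Every block occurs exactly once among the stacks. -/
def IsConfig {B S : ℕ} (C : Config B S) : Prop :=
  ∀ b : Fin B, (∑ s : Fin S, (C s).count b) = 1

/-- `a` lies strictly below `b` in stack `s` of `C`. -/
def StrictlyBelow {B S : ℕ} (C : Config B S) (s : Fin S) (a b : Fin B) : Prop :=
  ∃ i j : ℕ, i < j ∧ (C s)[i]? = some a ∧ (C s)[j]? = some b

/-- A block is badly placed if some smaller-labelled block lies below it in its stack. -/
def BadlyPlaced {B S : ℕ} (C : Config B S) (b : Fin B) : Prop :=
  ∃ s a, a < b ∧ StrictlyBelow C s a b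

/-- Moves: retrieve the top block of a stack, or relocate the top block of one
stack onto another stack. -/
inductive Move (S : ℕ) where
  | retrieve (s : Fin S)
  | relocate (src dst : Fin S)

def applyMove {B S : ℕ} (C : Config B S) : Move S → Config B S
  | .retrieve s => Function.update C s (C s).dropLast
  | .relocate src dst =>
    match (C src).getLast? with
    | some b =>
      let C' := Function.update C src (C src).dropLast
      Function.update C' dst (C' dst ++ [b])
    | none => C

def Enabled {B S : ℕ} (C : Config B S) : Move S → Prop
  | .retrieve s => ∃ b, (C s).getLast? = some b ∧ ∀ (s' : Fin S), ∀ b' ∈ C s', b ≤ b'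
  | .relocate src dst => src ≠ dst ∧ C src ≠ []

def play {B S : ℕ} (C : Config B S) : List (Move S) → Config B S
  | [] => C
  | m :: ms => play (applyMove C m) ms

def AllEnabled {B S : ℕ} (C : Config B S) : List (Move S) → Prop
  | [] => True
  | m :: ms => Enabled C m ∧ AllEnabled (applyMove C m) ms

/-- A feasible move sequence: every move is enabled and at the end all blocks
have been retrieved. -/
def Feasible {B S : ℕ} (C : Config B S) (ms : List (Move S)) : Prop :=
  AllEnabled C ms ∧ ∀ s, play C ms s = []

/-- `b` is the block moved by `m` (a relocation) performed in configuration `C`. -/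
def MovedBlock {B S : ℕ} (C : Config B S) (m : Move S) (b : Fin B) : Prop :=
  ∃ src dst, m = .relocate src dst ∧ src ≠ dst ∧ (C src).getLast? = some b

/-- The four types of relocation moves. -/
inductive MType where
  | BB | BG | GB | GG

/-- The relocation `m`, moving block `b` from configuration `C`, has the given type. -/
def MTypeOf {B S : ℕ} (C : Config B S) (m : Move S) (b : Fin B) : MType → Prop
  | .BB => BadlyPlaced C b ∧ BadlyPlaced (applyMove C m) b
  | .BG => BadlyPlaced C b ∧ ¬ BadlyPlaced (applyMove C m) b
  | .GB => ¬ BadlyPlaced C b ∧ BadlyPlaced (applyMove C m) b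
  | .GG => ¬ BadlyPlaced C b ∧ ¬ BadlyPlaced (applyMove C m) b

/-- `m` is a relocation of a block of `𝔅`. -/
def RelocIn {B S : ℕ} (𝔅 : Set (Fin B)) (C : Config B S) (m : Move S) : Prop :=
  ∃ b ∈ 𝔅, MovedBlock C m b

/-- `m` is a relocation of a block of `𝔅` of type `mt`. -/
def RelocTypeIn {B S : ℕ} (mt : MType) (𝔅 : Set (Fin B)) (C : Config B S) (m : Move S) : Prop :=
  ∃ b ∈ 𝔅, MovedBlock C m b ∧ MTypeOf C m b mt

/-- `m` is a non-BG relocation of a block of `𝔅`. -/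
def RelocNonBGIn {B S : ℕ} (𝔅 : Set (Fin B)) (C : Config B S) (m : Move S) : Prop :=
  ∃ b ∈ 𝔅, MovedBlock C m b ∧ ¬ MTypeOf C m b MType.BG

/-- Count the moves of a sequence satisfying `P` (evaluated in the configuration
in which each move is performed). -/
noncomputable def countMoves {B S : ℕ} (P : Config B S → Move S → Prop) :
    Config B S → List (Move S) → ℕ
  | _, [] => 0
  | C, m :: ms =>
    (@ite ℕ (P C m) (Classical.propDecidable _) 1 0) + countMoves P (applyMove C m) ms

/-- Minimum over feasible move sequences of the number of moves satisfying `P`. -/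
noncomputable def fMin {B S : ℕ} (C : Config B S) (P : Config B S → Move S → Prop) : ℕ :=
  sInf { n | ∃ ms, Feasible C ms ∧ countMoves P C ms = n }

/-- `f(𝔅)`: least number of relocations applied to blocks of `𝔅`. -/
noncomputable def fRel {B S : ℕ} (C : Config B S) (𝔅 : Set (Fin B)) : ℕ :=
  fMin C (RelocIn 𝔅)

/-- `f_mt(𝔅)`: least number of type-`mt` relocations applied to blocks of `𝔅`. -/
noncomputable def fTyp {B S : ℕ} (C : Config B S) (mt : MType) (𝔅 : Set (Fin B)) : ℕ :=
  fMin C (RelocTypeIn mt 𝔅)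

/-- `f_nonBG(𝔅)`: least number of non-BG relocations applied to blocks of `𝔅`. -/
noncomputable def fNonBG {B S : ℕ} (C : Config B S) (𝔅 : Set (Fin B)) : ℕ :=
  fMin C (RelocNonBGIn 𝔅)

/-- The top 1st layer: the topmost block of each stack. -/
def TopLayer {B S : ℕ} (C : Config B S) : Set (Fin B) :=
  {b | ∃ s, (C s).getLast? = some b}

/-- The top `k` layers: the topmost `k` blocks of every stack. -/
def TopK {B S : ℕ} (C : Config B S) (k : ℕ) : Set (Fin B) :=
  {b | ∃ s, b ∈ (C s).drop ((C s).length - k)}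

/-- The top `j`-th layer: the `j`-th block from the top of every stack. -/
def TopJth {B S : ℕ} (C : Config B S) (j : ℕ) : Set (Fin B) :=
  {b | ∃ s, (C s)[(C s).length - j]? = some b}

/-- A virtual layer: a set of blocks containing exactly one block from each stack. -/
def VirtualLayer {B S : ℕ} (C : Config B S) (V : Set (Fin B)) : Prop :=
  ∀ s : Fin S, ∃! b : Fin B, b ∈ V ∧ b ∈ C s

/-- `a` lies at or below the `V`-block of stack `s`. -/
def AtOrBelowLayer {B S : ℕ} (C : Config B S) (V : Set (Fin B)) (s : Fin S) (a : Fin B) : Prop :=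
  ∃ b j, b ∈ V ∧ (C s)[j]? = some b ∧ a ∈ (C s).take (j + 1)

/-- `V` is a virtual layer satisfying the conditions of Property 5:
(1) in some stack, a block strictly below the `V`-block of that stack has a smaller
label than every block of `V`; (2) every badly placed block of `V` has a label
strictly greater than the minimum label present in stack `s` after deleting all
blocks strictly above the `V`-block of `s`, for every stack `s`. -/
def P5 {B S : ℕ} (C : Config B S) (V : Set (Fin B)) : Prop :=
  VirtualLayer C V ∧
  (∃ s a b, b ∈ V ∧ StrictlyBelow C s a b ∧ ∀ c ∈ V, a < c) ∧
  (∀ b ∈ V, BadlyPlaced C b → ∀ s : Fin S, ∃ a, AtOrBelowLayer C V s a ∧ a < b)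

/-- A pair of virtual layers `V₁` (upper), `V₂` (lower) with shared well-placed
block `bstar` satisfying the conditions of Property 7. -/
def P7 {B S : ℕ} (C : Config B S) (V₁ V₂ : Set (Fin B)) (bstar : Fin B) : Prop :=
  V₁ ∩ V₂ = {bstar} ∧
  ¬ BadlyPlaced C bstar ∧
  (∀ s : Fin S, bstar ∉ C s →
    ∃ b₁ b₂, b₁ ∈ V₁ ∧ b₂ ∈ V₂ ∧ StrictlyBelow C s b₂ b₁) ∧
  P5 C V₁ ∧ P5 C V₂ ∧
  (∀ s : Fin S, ∃ a, AtOrBelowLayer C V₁ s a ∧ a ≤ bstar) ∧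
  (∃ s : Fin S, ∀ a, AtOrBelowLayer C V₁ s a → bstar ≤ a)

/-- Push blocks one by one onto the indicated stacks. -/
def pushAll {B S : ℕ} (C : Config B S) : List (Fin B × Fin S) → Config B S
  | [] => C
  | p :: rest => pushAll (Function.update C p.2 (C p.2 ++ [p.1])) rest

/-- The blocks lying strictly above position `i` of stack `s`, listed from the
top of the stack downward (the processing order of the experiment). -/
def aboveList {B S : ℕ} (C : Config B S) (s : Fin S) (i : ℕ) : List (Fin B) :=
  ((C s).drop (i + 1)).reverse

/-- The arrangement resulting from the experiment of Property 4: the blocks above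
position `i` of stack `s` are relocated exactly once, from the top downward, onto
the stacks listed in `ds`. -/
def expResult {B S : ℕ} (C : Config B S) (s : Fin S) (i : ℕ) (ds : List (Fin S)) :
    Config B S :=
  pushAll (Function.update C s ((C s).take (i + 1))) ((aboveList C s i).zip ds)

/-- The condition of Property 4 (target block at position `i` of stack `sStar`):
in every experiment, some relocated block ends badly placed. -/
def P4Cond {B S : ℕ} (C : Config B S) (sStar : Fin S) (i : ℕ) : Prop :=
  ∀ ds : List (Fin S), ds.length = (aboveList C sStar i).length →
    (∀ d ∈ ds, d ≠ sStar) →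
    ∃ b ∈ aboveList C sStar i, BadlyPlaced (expResult C sStar i ds) b

/-- The set `𝔅⁴`: the blocks above the target block together with, for each
nonempty stack other than the target's stack, its block of minimum label. -/
def B4Set {B S : ℕ} (C : Config B S) (sStar : Fin S) (i : ℕ) : Set (Fin B) :=
  {b | b ∈ aboveList C sStar i} ∪
  {b | ∃ s, s ≠ sStar ∧ b ∈ C s ∧ ∀ b' ∈ C s, b ≤ b'}

/-- The number of direct blockages: adjacent pairs in a stack whose upper block
has a strictly larger label. -/
def directBlockages {B S : ℕ} (C : Config B S) : ℕ :=
  ∑ s : Fin S, (((C s).zip (C s).tail).filter (fun p => decide (p.1 < p.2))).length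

/-- The number of relocations in a move sequence. -/
def relocCount {S : ℕ} (ms : List (Move S)) : ℕ :=
  (ms.filter (fun m => match m with | Move.relocate _ _ => true | Move.retrieve _ => false)).length

/-- The minimum number of relocations over all feasible move sequences. -/
noncomputable def fAll {B S : ℕ} (C : Config B S) : ℕ :=
  sInf { n | ∃ ms, Feasible C ms ∧ relocCount ms = n }

/-- `g(L)`: `L` plus the minimum number of direct blockages over all partial
plans with exactly `L` relocations. -/
noncomputable def gIter {B S : ℕ} (C : Config B S) (L : ℕ) : ℕ :=
  L + sInf { d | ∃ ms : List (Move S), AllEnabled C ms ∧ relocCount ms = L ∧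
      d = directBlockages (play C ms) }

lemma movedBlock_unique {B S : ℕ} {C : Config B S} {m : Move S} {b b' : Fin B}
    (h : MovedBlock C m b) (h' : MovedBlock C m b') : b = b' := by
  obtain ⟨s, d, rfl, -, hb⟩ := h
  obtain ⟨s', d', heq, -, hb'⟩ := h'
  cases heq
  rw [hb] at hb'
  exact Option.some_inj.mp hb'

lemma countMoves_add {B S : ℕ} (P Q R : Config B S → Move S → Prop)
    (hpt : ∀ C m, (@ite ℕ (P C m) (Classical.propDecidable _) 1 0) +
        (@ite ℕ (Q C m) (Classical.propDecidable _) 1 0) =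
        (@ite ℕ (R C m) (Classical.propDecidable _) 1 0)) :
    ∀ (C : Config B S) (ms : List (Move S)),
      countMoves P C ms + countMoves Q C ms = countMoves R C ms := by
  intro C ms
  induction ms generalizing C with
  | nil => simp [countMoves]
  | cons m ms ih =>
    simp only [countMoves]
    have h1 := hpt C m
    have h2 := ih (applyMove C m)
    omega

lemma countMoves_sum_le {B S n : ℕ} (P : Fin n → Config B S → Move S → Prop)
    (Pu : Config B S → Move S → Prop)
    (hpt : ∀ C m, (∑ i, (@ite ℕ (P i C m) (Classical.propDecidable _) 1 0))
        ≤ (@ite ℕ (Pu C m) (Classical.propDecidable _) 1 0)) :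
    ∀ (C : Config B S) (ms : List (Move S)),
      (∑ i, countMoves (P i) C ms) ≤ countMoves Pu C ms := by
  intro C ms
  induction ms generalizing C with
  | nil => simp [countMoves]
  | cons m ms ih =>
    simp only [countMoves, Finset.sum_add_distrib]
    exact Nat.add_le_add (hpt C m) (ih _)

lemma sum_ite_le_one {n : ℕ} (R : Fin n → Prop)
    (huniq : ∀ i j, R i → R j → i = j) :
    (∑ i, (@ite ℕ (R i) (Classical.propDecidable _) 1 0)) ≤ 1 := by
  by_cases h : ∃ i, R i
  · obtain ⟨i, hi⟩ := h
    have h0 : ∀ j ∈ Finset.univ, j ≠ i →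
        (@ite ℕ (R j) (Classical.propDecidable _) 1 0) = 0 := by
      intro j _ hj
      rw [if_neg]
      intro hRj; exact hj (huniq j i hRj hi)
    rw [Finset.sum_eq_single i h0 (by simp)]
    split <;> simp
  · push_neg at h
    rw [Finset.sum_eq_zero (fun i _ => if_neg (h i))]
    exact Nat.zero_le 1

lemma pointwise_split {B S : ℕ} (C : Config B S) (m : Move S) :
    (@ite ℕ (RelocTypeIn MType.BG Set.univ C m) (Classical.propDecidable _) 1 0) +
    (@ite ℕ (RelocNonBGIn Set.univ C m) (Classical.propDecidable _) 1 0) =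
    (@ite ℕ (RelocIn Set.univ C m) (Classical.propDecidable _) 1 0) := by
  by_cases h : RelocIn Set.univ C m
  · obtain ⟨b, -, hb⟩ := h
    by_cases hbg : MTypeOf C m b MType.BG
    · have h1 : RelocTypeIn MType.BG Set.univ C m := ⟨b, trivial, hb, hbg⟩
      have h2 : ¬ RelocNonBGIn Set.univ C m := by
        rintro ⟨b', -, hb', hn⟩
        obtain rfl := movedBlock_unique hb' hb
        exact hn hbg
      rw [if_pos h1, if_neg h2, if_pos ⟨b, trivial, hb⟩]
    · have h1 : ¬ RelocTypeIn MType.BG Set.univ C m := by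
        rintro ⟨b', -, hb', hn⟩
        obtain rfl := movedBlock_unique hb' hb
        exact hbg hn
      have h2 : RelocNonBGIn Set.univ C m := ⟨b, trivial, hb, hbg⟩
      rw [if_neg h1, if_pos h2, if_pos ⟨b, trivial, hb⟩]
  · have h1 : ¬ RelocTypeIn MType.BG Set.univ C m := by
      rintro ⟨b', -, hb', -⟩; exact h ⟨b', trivial, hb'⟩
    have h2 : ¬ RelocNonBGIn Set.univ C m := by
      rintro ⟨b', -, hb', -⟩; exact h ⟨b', trivial, hb'⟩
    rw [if_neg h1, if_neg h2, if_neg h]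

lemma pointwise_partition_typ {B S n : ℕ} (mt : MType) (𝔅 : Fin n → Set (Fin B))
    (hdisj : ∀ i j, i ≠ j → Disjoint (𝔅 i) (𝔅 j)) (C : Config B S) (m : Move S) :
    (∑ i, (@ite ℕ (RelocTypeIn mt (𝔅 i) C m) (Classical.propDecidable _) 1 0))
      ≤ (@ite ℕ (RelocTypeIn mt Set.univ C m) (Classical.propDecidable _) 1 0) := by
  by_cases h : RelocTypeIn mt Set.univ C m
  · rw [if_pos h]
    refine sum_ite_le_one _ ?_
    rintro i j ⟨b, hbi, hb, -⟩ ⟨b', hbj, hb', -⟩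
    obtain rfl := movedBlock_unique hb' hb
    by_contra hij
    exact Set.disjoint_left.mp (hdisj i j hij) hbi hbj
  · rw [if_neg h]
    rw [Finset.sum_eq_zero]
    intro i _
    rw [if_neg]
    rintro ⟨b, -, hb, ht⟩
    exact h ⟨b, trivial, hb, ht⟩

lemma pointwise_partition_nonBG {B S n : ℕ} (𝔅 : Fin n → Set (Fin B))
    (hdisj : ∀ i j, i ≠ j → Disjoint (𝔅 i) (𝔅 j)) (C : Config B S) (m : Move S) :
    (∑ i, (@ite ℕ (RelocNonBGIn (𝔅 i) C m) (Classical.propDecidable _) 1 0))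
      ≤ (@ite ℕ (RelocNonBGIn Set.univ C m) (Classical.propDecidable _) 1 0) := by
  by_cases h : RelocNonBGIn Set.univ C m
  · rw [if_pos h]
    refine sum_ite_le_one _ ?_
    rintro i j ⟨b, hbi, hb, -⟩ ⟨b', hbj, hb', -⟩
    obtain rfl := movedBlock_unique hb' hb
    by_contra hij
    exact Set.disjoint_left.mp (hdisj i j hij) hbi hbj
  · rw [if_neg h]
    rw [Finset.sum_eq_zero]
    intro i _
    rw [if_neg]
    rintro ⟨b, -, hb, ht⟩
    exact h ⟨b, trivial, hb, ht⟩

/-- for two partitions `𝔅¹` and `𝔅²` of the block set,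
`f(Fin B) ≥ f_BG(Fin B) + f_nonBG(Fin B) ≥ Σ_i f_BG(𝔅¹_i) + Σ_i f_nonBG(𝔅²_i)`. -/
theorem brp_two_partitions {B S : ℕ} (hS : 2 ≤ S) (hB : 1 ≤ B)
    (C : Config B S) (hC : IsConfig C)
    (n₁ n₂ : ℕ) (𝔅₁ : Fin n₁ → Set (Fin B)) (𝔅₂ : Fin n₂ → Set (Fin B))
    (hdisj₁ : ∀ i j, i ≠ j → Disjoint (𝔅₁ i) (𝔅₁ j))
    (hcover₁ : (⋃ i, 𝔅₁ i) = Set.univ)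
    (hdisj₂ : ∀ i j, i ≠ j → Disjoint (𝔅₂ i) (𝔅₂ j))
    (hcover₂ : (⋃ i, 𝔅₂ i) = Set.univ) :
    fRel C Set.univ ≥ fTyp C MType.BG Set.univ + fNonBG C Set.univ ∧
    fTyp C MType.BG Set.univ + fNonBG C Set.univ ≥
      (∑ i, fTyp C MType.BG (𝔅₁ i)) + ∑ i, fNonBG C (𝔅₂ i) := by
  by_cases hfeas : ∃ ms : List (Move S), Feasible C ms
  · obtain ⟨ms₀, hms₀⟩ := hfeas
    constructor
    · -- first inequality
      have hmem : fRel C Set.univ ∈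
          {n | ∃ ms, Feasible C ms ∧ countMoves (RelocIn Set.univ) C ms = n} :=
        Nat.sInf_mem ⟨_, ms₀, hms₀, rfl⟩
      obtain ⟨ms, hfe, hcnt⟩ := hmem
      have hBG : fTyp C MType.BG Set.univ ≤
          countMoves (RelocTypeIn MType.BG Set.univ) C ms :=
        Nat.sInf_le ⟨ms, hfe, rfl⟩
      have hNB : fNonBG C Set.univ ≤ countMoves (RelocNonBGIn Set.univ) C ms :=
        Nat.sInf_le ⟨ms, hfe, rfl⟩
      have hsplit := countMoves_add _ _ _ (pointwise_split (B := B) (S := S)) C ms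
      omega
    · -- second inequality
      have hmem1 : fTyp C MType.BG Set.univ ∈
          {n | ∃ ms, Feasible C ms ∧ countMoves (RelocTypeIn MType.BG Set.univ) C ms = n} :=
        Nat.sInf_mem ⟨_, ms₀, hms₀, rfl⟩
      obtain ⟨ms₁, hfe₁, hcnt₁⟩ := hmem1
      have hmem2 : fNonBG C Set.univ ∈
          {n | ∃ ms, Feasible C ms ∧ countMoves (RelocNonBGIn Set.univ) C ms = n} :=
        Nat.sInf_mem ⟨_, ms₀, hms₀, rfl⟩
      obtain ⟨ms₂, hfe₂, hcnt₂⟩ := hmem2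
      have h1 : (∑ i, fTyp C MType.BG (𝔅₁ i)) ≤ fTyp C MType.BG Set.univ := by
        calc (∑ i, fTyp C MType.BG (𝔅₁ i))
            ≤ ∑ i, countMoves (RelocTypeIn MType.BG (𝔅₁ i)) C ms₁ :=
              Finset.sum_le_sum (fun i _ => Nat.sInf_le ⟨ms₁, hfe₁, rfl⟩)
          _ ≤ countMoves (RelocTypeIn MType.BG Set.univ) C ms₁ :=
              countMoves_sum_le _ _ (pointwise_partition_typ MType.BG 𝔅₁ hdisj₁) C ms₁
          _ = fTyp C MType.BG Set.univ := hcnt₁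
      have h2 : (∑ i, fNonBG C (𝔅₂ i)) ≤ fNonBG C Set.univ := by
        calc (∑ i, fNonBG C (𝔅₂ i))
            ≤ ∑ i, countMoves (RelocNonBGIn (𝔅₂ i)) C ms₂ :=
              Finset.sum_le_sum (fun i _ => Nat.sInf_le ⟨ms₂, hfe₂, rfl⟩)
          _ ≤ countMoves (RelocNonBGIn Set.univ) C ms₂ :=
              countMoves_sum_le _ _ (pointwise_partition_nonBG 𝔅₂ hdisj₂) C ms₂
          _ = fNonBG C Set.univ := hcnt₂
      omega
  · have hempty : ∀ P : Config B S → Move S → Prop, fMin C P = 0 := by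
      intro P
      have he : {n | ∃ ms, Feasible C ms ∧ countMoves P C ms = n} = ∅ := by
        ext n
        simp only [Set.mem_setOf_eq, Set.mem_empty_iff_false, iff_false, not_exists]
        intro ms hms
        exact hfeas ⟨ms, hms.1⟩
      rw [fMin, he, Nat.sInf_empty]
    constructor <;> simp [fRel, fTyp, fNonBG, hempty]
end

section
/- (Property 1) Let C be an initial configuration of the BRP and let b be a block that is badly placed in C. Then every feasible move sequence for C contains at least one BG relocation of b; that is, f_BG({b}) ≥ 1. -/
/-!
A badly placed block `b` stays badly placed under every move other than a BG relocation of
`b` itself: the smaller block below `b` is never the top of its stack, so it is neither moved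
nor retrieved, and `b` cannot be retrieved while a smaller block is present. Since a feasible
sequence ends with no blocks at all, some move must be a BG relocation of `b`. For the bound
on `f_BG` one also needs a feasible sequence to exist (otherwise the infimum is `sInf ∅ = 0`);
with a second stack available, repeatedly relocating the blocks above the smallest remaining
block and then retrieving it empties any configuration.
-/

section

variable {B S : ℕ}

def Move.source : Move S → Fin S
  | .retrieve s => s
  | .relocate src _ => src

lemma prefix_update_append {α : Type*} (f : Fin S → List α) (d : Fin S) (x : α) (s : Fin S) :
    f s <+: Function.update f d (f d ++ [x]) s := by
  by_cases h : s = d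
  · subst h; simp
  · simp [h]

lemma applyMove_relocate_of_eq_append {C : Config B S} {src : Fin S} {l : List (Fin B)}
    {x : Fin B} (h : C src = l ++ [x]) (dst : Fin S) :
    applyMove C (.relocate src dst) =
      Function.update (Function.update C src l) dst (Function.update C src l dst ++ [x]) := by
  simp only [applyMove, h, List.getLast?_concat, List.dropLast_concat]

lemma dropLast_prefix_applyMove (C : Config B S) (m : Move S) (s : Fin S) :
    (C s).dropLast <+: applyMove C m s := by
  rcases m with s₀ | ⟨src, dst⟩
  · by_cases h : s = s₀
    · subst h; simp [applyMove]
    · simpa [applyMove, h] using List.dropLast_prefix (C s)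
  · rcases List.eq_nil_or_concat (C src) with hnil | ⟨l, x, hx⟩
    · simp [applyMove, hnil, List.dropLast_prefix]
    rw [List.concat_eq_append] at hx
    rw [applyMove_relocate_of_eq_append hx]
    refine List.IsPrefix.trans ?_ (prefix_update_append _ _ _ _)
    by_cases h : s = src
    · subst h; simp [hx]
    · simpa [h] using List.dropLast_prefix (C s)

lemma prefix_applyMove_of_source_ne (C : Config B S) {m : Move S} {s : Fin S}
    (h : m.source ≠ s) : C s <+: applyMove C m s := by
  rcases m with s₀ | ⟨src, dst⟩
  · simp [applyMove, Function.update_of_ne (Ne.symm h : s ≠ s₀)]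
  · rcases List.eq_nil_or_concat (C src) with hnil | ⟨l, x, hx⟩
    · simp [applyMove, hnil]
    rw [List.concat_eq_append] at hx
    rw [applyMove_relocate_of_eq_append hx]
    simpa [Function.update_of_ne (Ne.symm h : s ≠ src)] using
      prefix_update_append (Function.update C src l) dst x s

lemma strictlyBelow_of_prefix {C : Config B S} {s : Fin S} {l : List (Fin B)} {a b : Fin B}
    {i j : ℕ} (hij : i < j) (hi : l[i]? = some a) (hj : l[j]? = some b) (hl : l <+: C s) :
    StrictlyBelow C s a b := by
  obtain ⟨t, ht⟩ := hl
  refine ⟨i, j, hij, ?_, ?_⟩ <;> rw [← ht, List.getElem?_append_left (by grind)]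
  exacts [hi, hj]

lemma BadlyPlaced.applyMove {C : Config B S} {b : Fin B} {m : Move S} (hm : Enabled C m)
    (hb : BadlyPlaced C b) (hBG : ¬ RelocTypeIn MType.BG {b} C m) :
    BadlyPlaced (applyMove C m) b := by
  obtain ⟨s, a, hab, i, j, hij, hi, hj⟩ := hb
  have hjs : j < (C s).length := (List.getElem?_eq_some_iff.mp hj).1
  by_cases hnottop : j + 1 < (C s).length
  · refine ⟨s, a, hab, strictlyBelow_of_prefix hij ?_ ?_ (dropLast_prefix_applyMove C m s)⟩
    · rwa [List.getElem?_dropLast, if_pos (by omega)]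
    · rwa [List.getElem?_dropLast, if_pos (by omega)]
  have htop : (C s).getLast? = some b := by
    rwa [List.getLast?_eq_getElem?, show (C s).length - 1 = j by omega]
  by_cases hsrc : m.source = s
  swap
  · exact ⟨s, a, hab, strictlyBelow_of_prefix hij hi hj (prefix_applyMove_of_source_ne C hsrc)⟩
  rcases m with s₀ | ⟨src, dst⟩
  · obtain ⟨x, hx, hmin⟩ := hm
    obtain rfl : s₀ = s := hsrc
    obtain rfl : x = b := Option.some_inj.mp (hx.symm.trans htop)
    exact absurd (hmin s₀ a (List.mem_of_getElem? hi)) (not_le.mpr hab)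
  · obtain rfl : src = s := hsrc
    by_contra hwell
    exact hBG ⟨b, rfl, ⟨src, dst, rfl, hm.1, htop⟩, ⟨src, a, hab, i, j, hij, hi, hj⟩, hwell⟩

lemma one_le_countMoves_of_invariant {P : Config B S → Move S → Prop} {I : Config B S → Prop}
    (hI : ∀ C m, Enabled C m → I C → ¬ P C m → I (applyMove C m)) :
    ∀ {C : Config B S} {ms : List (Move S)}, AllEnabled C ms → I C → ¬ I (play C ms) →
      1 ≤ countMoves P C ms
  | _, [], _, hC, hend => absurd hC hend
  | C, m :: ms, hms, hC, hend => by
    rw [countMoves]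
    by_cases hP : P C m
    · rw [if_pos hP]; omega
    · rw [if_neg hP]
      have := one_le_countMoves_of_invariant hI hms.2 (hI C m hms.1 hC hP) hend
      omega

lemma not_badlyPlaced_of_forall_eq_nil {C : Config B S} (hC : ∀ s, C s = []) (b : Fin B) :
    ¬ BadlyPlaced C b := by
  rintro ⟨s, a, -, i, j, -, hi, -⟩
  simp [hC s] at hi

lemma one_le_countMoves_BG {C : Config B S} {b : Fin B} (hb : BadlyPlaced C b)
    {ms : List (Move S)} (hms : Feasible C ms) :
    1 ≤ countMoves (RelocTypeIn MType.BG {b}) C ms :=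
  one_le_countMoves_of_invariant (I := (BadlyPlaced · b))
    (fun _ _ hm hb hBG => hb.applyMove hm hBG) hms.1 hb
    (not_badlyPlaced_of_forall_eq_nil hms.2 b)

lemma play_append (C : Config B S) (ms₁ ms₂ : List (Move S)) :
    play C (ms₁ ++ ms₂) = play (play C ms₁) ms₂ := by
  induction ms₁ generalizing C with
  | nil => rfl
  | cons m ms ih => exact ih (applyMove C m)

lemma AllEnabled.append {C : Config B S} {ms₁ ms₂ : List (Move S)} (h₁ : AllEnabled C ms₁)
    (h₂ : AllEnabled (play C ms₁) ms₂) : AllEnabled C (ms₁ ++ ms₂) := by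
  induction ms₁ generalizing C with
  | nil => exact h₂
  | cons m ms ih => exact ⟨h₁.1, ih h₁.2 h₂⟩

def numBlocks (C : Config B S) : ℕ :=
  ∑ s, (C s).length

lemma numBlocks_update (C : Config B S) (s : Fin S) (l : List (Fin B)) :
    numBlocks (Function.update C s l) + (C s).length = numBlocks C + l.length := by
  classical
  have hrest : ∑ t ∈ Finset.univ.erase s, (Function.update C s l t).length =
      ∑ t ∈ Finset.univ.erase s, (C t).length :=
    Finset.sum_congr rfl fun t ht => by rw [Function.update_of_ne (Finset.ne_of_mem_erase ht)]
  unfold numBlocks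
  rw [← Finset.add_sum_erase _ _ (Finset.mem_univ s),
    ← Finset.add_sum_erase _ (fun t => (C t).length) (Finset.mem_univ s), hrest,
    Function.update_self]
  omega

lemma exists_mem_of_mem_applyMove_relocate {C : Config B S} {src dst s : Fin S} {x : Fin B}
    (h : x ∈ applyMove C (.relocate src dst) s) : ∃ t, x ∈ C t := by
  rcases List.eq_nil_or_concat (C src) with hnil | ⟨l, y, hy⟩
  · simp only [applyMove, hnil, List.getLast?_nil] at h
    exact ⟨s, h⟩
  rw [List.concat_eq_append] at hy
  rw [applyMove_relocate_of_eq_append hy] at h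
  have hU : ∀ t, ∀ z ∈ Function.update C src l t, ∃ t, z ∈ C t := fun t z hz => by
    by_cases ht : t = src
    · subst ht
      exact ⟨t, by simp_all⟩
    · exact ⟨t, by simpa [ht] using hz⟩
  by_cases hs : s = dst
  · subst hs
    rcases (by simpa using h : x ∈ Function.update C src l s ∨ x = y) with h | rfl
    · exact hU s x h
    · exact ⟨src, by simp [hy]⟩
  · exact hU s x (by simpa [hs] using h)

lemma exists_allEnabled_numBlocks_succ (hS : 2 ≤ S) {x : Fin B} (C : Config B S) (s : Fin S)
    (hx : x ∈ C s) (hmin : ∀ t, ∀ y ∈ C t, x ≤ y) :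
    ∃ ms, AllEnabled C ms ∧ numBlocks (play C ms) + 1 = numBlocks C := by
  obtain ⟨l, y, hy⟩ : ∃ l y, C s = l ++ [y] := by
    rcases List.eq_nil_or_concat (C s) with h | ⟨l, y, h⟩
    · simp [h] at hx
    · exact ⟨l, y, by rw [h, List.concat_eq_append]⟩
  by_cases hyx : y = x
  · subst hyx
    refine ⟨[.retrieve s], ⟨⟨y, by simp [hy], hmin⟩, trivial⟩, ?_⟩
    have := numBlocks_update C s l
    simp only [play, applyMove, hy, List.dropLast_concat, List.length_append,
      List.length_singleton] at this ⊢
    omega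
  obtain ⟨t, hts⟩ := Fintype.exists_ne_of_one_lt_card (by rw [Fintype.card_fin]; omega) s
  have hmove := applyMove_relocate_of_eq_append hy t
  have hC's : applyMove C (.relocate s t) s = l := by
    simp [hmove, Function.update_of_ne hts.symm]
  have hsize : numBlocks (applyMove C (.relocate s t)) = numBlocks C := by
    have h₁ := numBlocks_update C s l
    have h₂ := numBlocks_update (Function.update C s l) t (Function.update C s l t ++ [y])
    rw [← hmove, List.length_append, List.length_singleton] at h₂
    rw [hy, List.length_append, List.length_singleton] at h₁
    omega
  have hxl : x ∈ l := by
    rw [hy] at hx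
    simpa [Ne.symm hyx] using hx
  obtain ⟨ms, hms, hms_size⟩ := exists_allEnabled_numBlocks_succ hS
    (applyMove C (.relocate s t)) s (hC's ▸ hxl) fun t' y' hy' => by
      obtain ⟨u, hu⟩ := exists_mem_of_mem_applyMove_relocate hy'
      exact hmin u y' hu
  exact ⟨.relocate s t :: ms, ⟨⟨hts.symm, by simp [hy]⟩, hms⟩, by rwa [← hsize]⟩
termination_by (C s).length
decreasing_by simp [hC's, hy]

lemma exists_feasible (hS : 2 ≤ S) (C : Config B S) : ∃ ms, Feasible C ms := by
  by_cases hempty : ∀ s, C s = []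
  · exact ⟨[], trivial, hempty⟩
  push Not at hempty
  obtain ⟨s, hs⟩ := hempty
  classical
  let T := Finset.univ.biUnion fun t => (C t).toFinset
  have hT : T.Nonempty := ⟨(C s).head hs, by simpa [T] using ⟨s, List.head_mem hs⟩⟩
  obtain ⟨t, ht⟩ : ∃ t, T.min' hT ∈ C t := by simpa [T] using T.min'_mem hT
  obtain ⟨ms₁, hms₁, hsize⟩ := exists_allEnabled_numBlocks_succ hS C t ht
    fun u y hy => T.min'_le y (by simpa [T] using ⟨u, hy⟩)
  obtain ⟨ms₂, hms₂⟩ := exists_feasible hS (play C ms₁)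
  exact ⟨ms₁ ++ ms₂, hms₁.append hms₂.1, by rw [play_append]; exact hms₂.2⟩
termination_by numBlocks C
decreasing_by omega

end

theorem brp_property1_general {B S : ℕ} (hS : 2 ≤ S)
    (C : Config B S) (b : Fin B) (hb : BadlyPlaced C b) :
    (∀ ms, Feasible C ms → 1 ≤ countMoves (RelocTypeIn MType.BG {b}) C ms) ∧
    1 ≤ fTyp C MType.BG {b} := by
  have hcount : ∀ ms, Feasible C ms → 1 ≤ countMoves (RelocTypeIn MType.BG {b}) C ms :=
    fun _ hms => one_le_countMoves_BG hb hms
  obtain ⟨ms, hms⟩ := exists_feasible hS C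
  exact ⟨hcount, le_csInf ⟨_, ms, hms, rfl⟩ fun _ ⟨ms', hms', hn⟩ => hn ▸ hcount ms' hms'⟩

/-- Property 1: if `b` is badly placed in `C`, every feasible move
sequence contains at least one BG relocation of `b`; that is, `f_BG({b}) ≥ 1`. -/
theorem brp_property1 {B S : ℕ} (hS : 2 ≤ S) (hB : 1 ≤ B)
    (C : Config B S) (hC : IsConfig C) (b : Fin B) (hb : BadlyPlaced C b) :
    (∀ ms, Feasible C ms → 1 ≤ countMoves (RelocTypeIn MType.BG {b}) C ms) ∧
    1 ≤ fTyp C MType.BG {b} :=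
  brp_property1_general hS C b hb
end
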